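/- For every integer n ≥ 1, the map σ(i,j,k) = (i, 1+i−j, n+1+i−k) is an involution of V_n ∖ {(0,0,n+1)}, every edge label of every tile of T_n lies in V_n ∖ {(0,0,n+1)}, and T_n = {(σ(l), σ(b), σ(r), σ(t)) : (r,t,l,b) ∈ T_n}; that is, T_n is invariant under rotation by half a turn followed by the relabeling σ of the edge labels. -/
import Mathlib


structure WangTile (C : Type*) where
  right : C
  top : C
  left : C
  bottom : C
deriving DecidableEq

abbrev Lbl : Type := ℤ × ℤ × ℤ

def Vn (n : ℤ) : Set Lbl :=
  {v | 0 ≤ v.1 ∧ v.1 ≤ v.2.1 ∧ v.2.1 ≤ 1 ∧ v.2.1 ≤ v.2.2 ∧ v.2.2 ≤ n + 1}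

def hatT {C : Type*} (t : WangTile C) : WangTile C :=
  ⟨t.top, t.right, t.bottom, t.left⟩

def whiteTiles (n : ℤ) : Set (WangTile Lbl) :=
  {t | ∃ i j : ℤ, 1 ≤ i ∧ i ≤ n ∧ 1 ≤ j ∧ j ≤ n ∧
    t = ⟨(1, 1, i + 1), (1, 1, j + 1), (1, 1, i), (1, 1, j)⟩}

def blueH (n : ℤ) : Set (WangTile Lbl) :=
  {t | ∃ i : ℤ, 0 ≤ i ∧ i ≤ n ∧ t = ⟨(0, 0, i + 1), (1, 1, 1), (0, 0, i), (1, 1, n)⟩}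

def greenH (n : ℤ) : Set (WangTile Lbl) :=
  {t | ∃ i : ℤ, 0 ≤ i ∧ i ≤ n ∧ t = ⟨(0, 1, i + 1), (1, 1, 1), (0, 0, i), (1, 1, n + 1)⟩}

def yellowH (n : ℤ) : Set (WangTile Lbl) :=
  {t | ∃ i : ℤ, 1 ≤ i ∧ i ≤ n ∧ t = ⟨(0, 1, i + 1), (1, 1, 2), (0, 1, i), (1, 1, n + 1)⟩}

def antiH (n : ℤ) : Set (WangTile Lbl) :=
  {t | ∃ i : ℤ, 1 ≤ i ∧ i ≤ n ∧ t = ⟨(0, 0, i + 1), (1, 1, 2), (0, 1, i), (1, 1, n)⟩}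

def junctionTile (n k l r s : ℤ) : WangTile Lbl :=
  ⟨(0, k, l), (0, r, s), (0, s, r + n), (0, l, k + n)⟩

def jPairs : Set (ℤ × ℤ) := {(0, 0), (0, 1), (1, 1)}

def junctions (n : ℤ) : Set (WangTile Lbl) :=
  {t | ∃ k l r s : ℤ, (k, l) ∈ jPairs ∧ (r, s) ∈ jPairs ∧ t = junctionTile n k l r s}

def Text (n : ℤ) : Set (WangTile Lbl) :=
  whiteTiles n ∪ blueH n ∪ greenH n ∪ yellowH n ∪ antiH n ∪
    hatT '' blueH n ∪ hatT '' greenH n ∪ hatT '' yellowH n ∪ hatT '' antiH n ∪ junctions n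

def Dset (n : ℤ) : Set (WangTile Lbl) :=
  {(⟨(0, 0, n + 1), (1, 1, 1), (0, 0, n), (1, 1, n)⟩ : WangTile Lbl),
    hatT (⟨(0, 0, n + 1), (1, 1, 1), (0, 0, n), (1, 1, n)⟩ : WangTile Lbl),
    junctionTile n 0 0 1 1, junctionTile n 1 1 0 0}

def Tmet (n : ℤ) : Set (WangTile Lbl) :=
  Text n \ (antiH n ∪ hatT '' antiH n ∪ Dset n)

def ValidConfig {C : Type*} (T : Set (WangTile C)) (x : ℤ × ℤ → WangTile C) : Prop :=
  (∀ m, x m ∈ T) ∧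
    (∀ m : ℤ × ℤ, (x m).right = (x (m.1 + 1, m.2)).left) ∧
    (∀ m : ℤ × ℤ, (x m).top = (x (m.1, m.2 + 1)).bottom)

def ValidPattern {C : Type*} (T : Set (WangTile C)) (w h : ℕ) (p : ℕ → ℕ → WangTile C) : Prop :=
  (∀ i j, i < w → j < h → p i j ∈ T) ∧
    (∀ i j, i + 1 < w → j < h → (p i j).right = (p (i + 1) j).left) ∧
    (∀ i j, i < w → j + 1 < h → (p i j).top = (p i (j + 1)).bottom)

def bottomWord {C : Type*} (w : ℕ) (p : ℕ → ℕ → WangTile C) : List C :=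
  (List.range w).map fun i => (p i 0).bottom

def topWord {C : Type*} (w h : ℕ) (p : ℕ → ℕ → WangTile C) : List C :=
  (List.range w).map fun i => (p i (h - 1)).top

def leftWord {C : Type*} (h : ℕ) (p : ℕ → ℕ → WangTile C) : List C :=
  (List.range h).map fun j => (p 0 j).left

def rightWord {C : Type*} (w h : ℕ) (p : ℕ → ℕ → WangTile C) : List C :=
  (List.range h).map fun j => (p (w - 1) j).right

def tau (n : ℤ) (v : Lbl) : List Lbl :=
  if v.1 = v.2.2 then
    (0, v.1 - v.2.1 + 1, n + 1) :: List.replicate (n - v.2.2).toNat (1, 1, n + 1)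
  else
    (0, v.1 - v.2.1 + 1, n) ::
      (List.replicate (v.2.2 - v.1 - 1).toNat (1, 1, n) ++
        List.replicate (n + 1 - v.2.2).toNat (1, 1, n + 1))

def sigmaInvol (n : ℤ) (v : Lbl) : Lbl :=
  (v.1, 1 + v.1 - v.2.1, n + 1 + v.1 - v.2.2)

def wTile (i j : ℤ) : WangTile Lbl := ⟨(1,1,i+1),(1,1,j+1),(1,1,i),(1,1,j)⟩
def bTile (n i : ℤ) : WangTile Lbl := ⟨(0,0,i+1),(1,1,1),(0,0,i),(1,1,n)⟩
def gTile (n i : ℤ) : WangTile Lbl := ⟨(0,1,i+1),(1,1,1),(0,0,i),(1,1,n+1)⟩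
def yTile (n i : ℤ) : WangTile Lbl := ⟨(0,1,i+1),(1,1,2),(0,1,i),(1,1,n+1)⟩

def rho (n : ℤ) (t : WangTile Lbl) : WangTile Lbl :=
  ⟨sigmaInvol n t.left, sigmaInvol n t.bottom, sigmaInvol n t.right, sigmaInvol n t.top⟩

lemma sigma_sigma (n : ℤ) (v : Lbl) : sigmaInvol n (sigmaInvol n v) = v := by
  simp [sigmaInvol, Prod.ext_iff] <;> omega

lemma rho_rho (n : ℤ) (t : WangTile Lbl) : rho n (rho n t) = t := by
  cases t; simp [rho, sigma_sigma]

lemma rho_w (n i j : ℤ) : rho n (wTile i j) = wTile (n+1-i) (n+1-j) := by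
  simp [rho, wTile, sigmaInvol, Prod.ext_iff, WangTile.mk.injEq] <;> omega

lemma rho_b (n i : ℤ) : rho n (bTile n i) = yTile n (n - i) := by
  simp [rho, bTile, yTile, sigmaInvol, Prod.ext_iff, WangTile.mk.injEq] <;> omega

lemma rho_y (n i : ℤ) : rho n (yTile n i) = bTile n (n - i) := by
  simp [rho, bTile, yTile, sigmaInvol, Prod.ext_iff, WangTile.mk.injEq] <;> omega

lemma rho_g (n i : ℤ) : rho n (gTile n i) = gTile n (n - i) := by
  simp [rho, gTile, sigmaInvol, Prod.ext_iff, WangTile.mk.injEq] <;> omega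

lemma rho_hat (n : ℤ) (t : WangTile Lbl) : rho n (hatT t) = hatT (rho n t) := by
  cases t; rfl

lemma rho_j (n k l r s : ℤ) :
    rho n (junctionTile n k l r s) = junctionTile n (1-s) (1-r) (1-l) (1-k) := by
  simp [rho, junctionTile, sigmaInvol, Prod.ext_iff, WangTile.mk.injEq] <;> omega
lemma jmem {k l : ℤ} (h : (k, l) ∈ jPairs) :
    (k = 0 ∧ l = 0) ∨ (k = 0 ∧ l = 1) ∨ (k = 1 ∧ l = 1) := by
  simp [jPairs, Prod.ext_iff] at h
  tauto

lemma jmem' {k l : ℤ} (h : (k = 0 ∧ l = 0) ∨ (k = 0 ∧ l = 1) ∨ (k = 1 ∧ l = 1)) :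
    (k, l) ∈ jPairs := by
  simp [jPairs, Prod.ext_iff]
  tauto

lemma tmet_cases {n : ℤ} {t : WangTile Lbl} (ht : t ∈ Tmet n) :
    (∃ i j, 1 ≤ i ∧ i ≤ n ∧ 1 ≤ j ∧ j ≤ n ∧ t = wTile i j) ∨
    (∃ i, 0 ≤ i ∧ i ≤ n - 1 ∧ t = bTile n i) ∨
    (∃ i, 0 ≤ i ∧ i ≤ n ∧ t = gTile n i) ∨
    (∃ i, 1 ≤ i ∧ i ≤ n ∧ t = yTile n i) ∨
    (∃ i, 0 ≤ i ∧ i ≤ n - 1 ∧ t = hatT (bTile n i)) ∨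
    (∃ i, 0 ≤ i ∧ i ≤ n ∧ t = hatT (gTile n i)) ∨
    (∃ i, 1 ≤ i ∧ i ≤ n ∧ t = hatT (yTile n i)) ∨
    (∃ k l r s, (k, l) ∈ jPairs ∧ (r, s) ∈ jPairs ∧
      ¬(k = 0 ∧ l = 0 ∧ r = 1 ∧ s = 1) ∧ ¬(k = 1 ∧ l = 1 ∧ r = 0 ∧ s = 0) ∧
      t = junctionTile n k l r s) := by
  obtain ⟨hT, hE⟩ := ht
  rcases hT with ((((((((hw | hb) | hg) | hy) | ha) | hbh) | hgh) | hyh) | hah) | hj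
  · obtain ⟨i, j, h1, h2, h3, h4, he⟩ := hw
    exact Or.inl ⟨i, j, h1, h2, h3, h4, he⟩
  · obtain ⟨i, h1, h2, he⟩ := hb
    refine Or.inr (Or.inl ⟨i, h1, ?_, he⟩)
    by_contra h
    have hin : i = n := by omega
    subst hin
    exact hE (Or.inr (by rw [he]; simp [Dset]))
  · obtain ⟨i, h1, h2, he⟩ := hg
    exact Or.inr (Or.inr (Or.inl ⟨i, h1, h2, he⟩))
  · obtain ⟨i, h1, h2, he⟩ := hy
    exact Or.inr (Or.inr (Or.inr (Or.inl ⟨i, h1, h2, he⟩)))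
  · exact (hE (Or.inl (Or.inl ha))).elim
  · obtain ⟨x, ⟨i, h1, h2, rfl⟩, rfl⟩ := hbh
    refine Or.inr (Or.inr (Or.inr (Or.inr (Or.inl ⟨i, h1, ?_, rfl⟩))))
    by_contra h
    have hin : i = n := by omega
    subst hin
    exact hE (Or.inr (by simp [Dset]))
  · obtain ⟨x, ⟨i, h1, h2, rfl⟩, rfl⟩ := hgh
    exact Or.inr (Or.inr (Or.inr (Or.inr (Or.inr (Or.inl ⟨i, h1, h2, rfl⟩)))))
  · obtain ⟨x, ⟨i, h1, h2, rfl⟩, rfl⟩ := hyh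
    exact Or.inr (Or.inr (Or.inr (Or.inr (Or.inr (Or.inr (Or.inl ⟨i, h1, h2, rfl⟩))))))
  · obtain ⟨x, hx, rfl⟩ := hah
    exact (hE (Or.inl (Or.inr ⟨x, hx, rfl⟩))).elim
  · obtain ⟨k, l, r, s, hkl, hrs, he⟩ := hj
    refine Or.inr (Or.inr (Or.inr (Or.inr (Or.inr (Or.inr (Or.inr ⟨k, l, r, s, hkl, hrs, ?_, ?_, he⟩))))))
    · rintro ⟨rfl, rfl, rfl, rfl⟩
      exact hE (Or.inr (by rw [he]; simp [Dset]))
    · rintro ⟨rfl, rfl, rfl, rfl⟩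
      exact hE (Or.inr (by rw [he]; simp [Dset]))
lemma wTile_mem {n i j : ℤ} (h1 : 1 ≤ i) (h2 : i ≤ n) (h3 : 1 ≤ j) (h4 : j ≤ n) :
    wTile i j ∈ Tmet n := by
  refine ⟨Or.inl (Or.inl (Or.inl (Or.inl (Or.inl (Or.inl (Or.inl (Or.inl
    (Or.inl ⟨i, j, h1, h2, h3, h4, rfl⟩)))))))), ?_⟩
  rintro ((⟨i', hi1, hi2, he⟩ | ⟨x, ⟨i', hi1, hi2, rfl⟩, he⟩) | he)
  · simp [wTile, WangTile.mk.injEq, Prod.ext_iff] at he <;> omega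
  · simp [wTile, hatT, WangTile.mk.injEq, Prod.ext_iff] at he <;> omega
  · simp [wTile, Dset, junctionTile, hatT, WangTile.mk.injEq, Prod.ext_iff] at he <;> omega

lemma bTile_mem {n i : ℤ} (h1 : 0 ≤ i) (h2 : i ≤ n - 1) : bTile n i ∈ Tmet n := by
  refine ⟨Or.inl (Or.inl (Or.inl (Or.inl (Or.inl (Or.inl (Or.inl (Or.inl
    (Or.inr ⟨i, h1, by omega, rfl⟩)))))))), ?_⟩
  rintro ((⟨i', hi1, hi2, he⟩ | ⟨x, ⟨i', hi1, hi2, rfl⟩, he⟩) | he)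
  · simp [bTile, WangTile.mk.injEq, Prod.ext_iff] at he <;> omega
  · simp [bTile, hatT, WangTile.mk.injEq, Prod.ext_iff] at he <;> omega
  · simp [bTile, Dset, junctionTile, hatT, WangTile.mk.injEq, Prod.ext_iff] at he <;> omega

lemma gTile_mem {n i : ℤ} (hn : 1 ≤ n) (h1 : 0 ≤ i) (h2 : i ≤ n) : gTile n i ∈ Tmet n := by
  refine ⟨Or.inl (Or.inl (Or.inl (Or.inl (Or.inl (Or.inl (Or.inl
    (Or.inr ⟨i, h1, h2, rfl⟩))))))), ?_⟩
  rintro ((⟨i', hi1, hi2, he⟩ | ⟨x, ⟨i', hi1, hi2, rfl⟩, he⟩) | he)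
  · simp [gTile, WangTile.mk.injEq, Prod.ext_iff] at he <;> omega
  · simp [gTile, hatT, WangTile.mk.injEq, Prod.ext_iff] at he <;> omega
  · simp [gTile, Dset, junctionTile, hatT, WangTile.mk.injEq, Prod.ext_iff] at he <;> omega

lemma yTile_mem {n i : ℤ} (hn : 1 ≤ n) (h1 : 1 ≤ i) (h2 : i ≤ n) : yTile n i ∈ Tmet n := by
  refine ⟨Or.inl (Or.inl (Or.inl (Or.inl (Or.inl (Or.inl
    (Or.inr ⟨i, h1, h2, rfl⟩)))))), ?_⟩
  rintro ((⟨i', hi1, hi2, he⟩ | ⟨x, ⟨i', hi1, hi2, rfl⟩, he⟩) | he)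
  · simp [yTile, WangTile.mk.injEq, Prod.ext_iff] at he <;> omega
  · simp [yTile, hatT, WangTile.mk.injEq, Prod.ext_iff] at he <;> omega
  · simp [yTile, Dset, junctionTile, hatT, WangTile.mk.injEq, Prod.ext_iff] at he <;> omega

lemma hb_mem {n i : ℤ} (h1 : 0 ≤ i) (h2 : i ≤ n - 1) : hatT (bTile n i) ∈ Tmet n := by
  refine ⟨Or.inl (Or.inl (Or.inl (Or.inl
    (Or.inr ⟨bTile n i, ⟨i, h1, by omega, rfl⟩, rfl⟩)))), ?_⟩
  rintro ((⟨i', hi1, hi2, he⟩ | ⟨x, ⟨i', hi1, hi2, rfl⟩, he⟩) | he)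
  · simp [bTile, hatT, WangTile.mk.injEq, Prod.ext_iff] at he <;> omega
  · simp [bTile, hatT, WangTile.mk.injEq, Prod.ext_iff] at he <;> omega
  · simp [bTile, Dset, junctionTile, hatT, WangTile.mk.injEq, Prod.ext_iff] at he <;> omega

lemma hg_mem {n i : ℤ} (hn : 1 ≤ n) (h1 : 0 ≤ i) (h2 : i ≤ n) : hatT (gTile n i) ∈ Tmet n := by
  refine ⟨Or.inl (Or.inl (Or.inl
    (Or.inr ⟨gTile n i, ⟨i, h1, h2, rfl⟩, rfl⟩))), ?_⟩
  rintro ((⟨i', hi1, hi2, he⟩ | ⟨x, ⟨i', hi1, hi2, rfl⟩, he⟩) | he)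
  · simp [gTile, hatT, WangTile.mk.injEq, Prod.ext_iff] at he <;> omega
  · simp [gTile, hatT, WangTile.mk.injEq, Prod.ext_iff] at he <;> omega
  · simp [gTile, Dset, junctionTile, hatT, WangTile.mk.injEq, Prod.ext_iff] at he <;> omega

lemma hy_mem {n i : ℤ} (hn : 1 ≤ n) (h1 : 1 ≤ i) (h2 : i ≤ n) : hatT (yTile n i) ∈ Tmet n := by
  refine ⟨Or.inl (Or.inl
    (Or.inr ⟨yTile n i, ⟨i, h1, h2, rfl⟩, rfl⟩)), ?_⟩
  rintro ((⟨i', hi1, hi2, he⟩ | ⟨x, ⟨i', hi1, hi2, rfl⟩, he⟩) | he)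
  · simp [yTile, hatT, WangTile.mk.injEq, Prod.ext_iff] at he <;> omega
  · simp [yTile, hatT, WangTile.mk.injEq, Prod.ext_iff] at he <;> omega
  · simp [yTile, Dset, junctionTile, hatT, WangTile.mk.injEq, Prod.ext_iff] at he <;> omega

lemma junction_mem {n k l r s : ℤ} (hn : 1 ≤ n)
    (hkl : (k, l) ∈ jPairs) (hrs : (r, s) ∈ jPairs)
    (hd1 : ¬(k = 0 ∧ l = 0 ∧ r = 1 ∧ s = 1)) (hd2 : ¬(k = 1 ∧ l = 1 ∧ r = 0 ∧ s = 0)) :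
    junctionTile n k l r s ∈ Tmet n := by
  have h1 := jmem hkl
  have h2 := jmem hrs
  refine ⟨Or.inr ⟨k, l, r, s, hkl, hrs, rfl⟩, ?_⟩
  rintro ((⟨i', hi1, hi2, he⟩ | ⟨x, ⟨i', hi1, hi2, rfl⟩, he⟩) | he)
  · simp [junctionTile, WangTile.mk.injEq, Prod.ext_iff] at he <;> omega
  · simp [junctionTile, hatT, WangTile.mk.injEq, Prod.ext_iff] at he <;> omega
  · simp [Dset, junctionTile, hatT, WangTile.mk.injEq, Prod.ext_iff] at he <;> omega
lemma rho_mem {n : ℤ} (hn : 1 ≤ n) {t : WangTile Lbl} (ht : t ∈ Tmet n) :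
    rho n t ∈ Tmet n := by
  rcases tmet_cases ht with ⟨i, j, h1, h2, h3, h4, rfl⟩ | ⟨i, h1, h2, rfl⟩ |
    ⟨i, h1, h2, rfl⟩ | ⟨i, h1, h2, rfl⟩ | ⟨i, h1, h2, rfl⟩ | ⟨i, h1, h2, rfl⟩ |
    ⟨i, h1, h2, rfl⟩ | ⟨k, l, r, s, hkl, hrs, hd1, hd2, rfl⟩
  · rw [rho_w]; exact wTile_mem (by omega) (by omega) (by omega) (by omega)
  · rw [rho_b]; exact yTile_mem hn (by omega) (by omega)
  · rw [rho_g]; exact gTile_mem hn (by omega) (by omega)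
  · rw [rho_y]; exact bTile_mem (by omega) (by omega)
  · rw [rho_hat, rho_b]; exact hy_mem hn (by omega) (by omega)
  · rw [rho_hat, rho_g]; exact hg_mem hn (by omega) (by omega)
  · rw [rho_hat, rho_y]; exact hb_mem (by omega) (by omega)
  · rw [rho_j]
    have h1 := jmem hkl
    have h2 := jmem hrs
    exact junction_mem hn (jmem' (by omega)) (jmem' (by omega)) (by omega) (by omega)


/-- half-turn symmetry of `T_n` via the involution `σ`. -/
theorem stmt1 (n : ℤ) (hn : 1 ≤ n) :
    (∀ v ∈ Vn n \ {((0, 0, n + 1) : Lbl)},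
      sigmaInvol n v ∈ Vn n \ {((0, 0, n + 1) : Lbl)} ∧
        sigmaInvol n (sigmaInvol n v) = v) ∧
    (∀ t ∈ Tmet n,
      t.right ∈ Vn n \ {((0, 0, n + 1) : Lbl)} ∧
      t.top ∈ Vn n \ {((0, 0, n + 1) : Lbl)} ∧
      t.left ∈ Vn n \ {((0, 0, n + 1) : Lbl)} ∧
      t.bottom ∈ Vn n \ {((0, 0, n + 1) : Lbl)}) ∧
    Tmet n = {s : WangTile Lbl | ∃ t ∈ Tmet n,
      s = ⟨sigmaInvol n t.left, sigmaInvol n t.bottom,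
           sigmaInvol n t.right, sigmaInvol n t.top⟩} := by
  refine ⟨?_, ?_, ?_⟩
  · intro v hv
    obtain ⟨hv1, hv2⟩ := hv
    refine ⟨?_, sigma_sigma n v⟩
    simp only [Vn, Set.mem_setOf_eq, Set.mem_diff, Set.mem_singleton_iff, sigmaInvol,
      Prod.ext_iff] at *
    omega
  · intro t ht
    rcases tmet_cases ht with ⟨i, j, h1, h2, h3, h4, rfl⟩ | ⟨i, h1, h2, rfl⟩ |
      ⟨i, h1, h2, rfl⟩ | ⟨i, h1, h2, rfl⟩ | ⟨i, h1, h2, rfl⟩ | ⟨i, h1, h2, rfl⟩ |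
      ⟨i, h1, h2, rfl⟩ | ⟨k, l, r, s, hkl, hrs, hd1, hd2, rfl⟩
    · simp [wTile, Vn, Set.mem_diff, Prod.ext_iff] <;> omega
    · simp [bTile, Vn, Set.mem_diff, Prod.ext_iff] <;> omega
    · simp [gTile, Vn, Set.mem_diff, Prod.ext_iff] <;> omega
    · simp [yTile, Vn, Set.mem_diff, Prod.ext_iff] <;> omega
    · simp [bTile, hatT, Vn, Set.mem_diff, Prod.ext_iff] <;> omega
    · simp [gTile, hatT, Vn, Set.mem_diff, Prod.ext_iff] <;> omega
    · simp [yTile, hatT, Vn, Set.mem_diff, Prod.ext_iff] <;> omega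
    · have h1 := jmem hkl
      have h2 := jmem hrs
      simp [junctionTile, Vn, Set.mem_diff, Prod.ext_iff] <;> omega
  · ext u
    simp only [Set.mem_setOf_eq]
    constructor
    · intro hu
      exact ⟨rho n u, rho_mem hn hu, (rho_rho n u).symm⟩
    · rintro ⟨t, ht, rfl⟩
      exact rho_mem hn ht
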